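/- arXiv:2408.13537 — 2 statements merged into one kernel-verified Lean document; each statement's English description precedes it below -/
import Mathlib

section
/- Let r>0, 1≤p<∞, and let ρ be an A_{p,3r}-metric on ℂⁿ. Suppose that for each ν∈rℤ^{2n} there is a positive invertible self-adjoint d×d matrix R_{Q_r(ν)} with ρ_{p,Q_r(ν)}(x) ≤ |R_{Q_r(ν)} x| ≤ √d·ρ_{p,Q_r(ν)}(x) for all x∈ℂᵈ. Then for all ν,ν'∈rℤ^{2n}, the operator norm satisfies ‖R_{Q_r(ν)} R_{Q_r(ν')}^{-1}‖ ≤ √d·(3^{2n}·A_{p,3r}(ρ))^{(√(2n)/r)|ν−ν'|}. -/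
open MeasureTheory ENNReal
open scoped ComplexOrder

noncomputable section

/-- `ℂⁿ` as a Euclidean space. -/
abbrev Cspace (n : ℕ) := EuclideanSpace ℂ (Fin n)

/-- Lebesgue measure on `ℂⁿ`. -/
instance CspaceMeasureSpace (n : ℕ) : MeasureSpace (Cspace n) where
  volume := Measure.map (WithLp.toLp 2) (volume : Measure (Fin n → ℂ))

/-- The (closed) cube in `ℂⁿ ≅ ℝ^{2n}` centered at `u` with side length `r`. -/
def cube {n : ℕ} (u : Cspace n) (r : ℝ) : Set (Cspace n) :=
  {z | ∀ j, |(z j).re - (u j).re| ≤ r / 2 ∧ |(z j).im - (u j).im| ≤ r / 2}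

/-- A `d × d` complex matrix acting on the Euclidean space `ℂᵈ`. -/
def matAct {d : ℕ} (M : Matrix (Fin d) (Fin d) ℂ) (x : EuclideanSpace ℂ (Fin d)) :
    EuclideanSpace ℂ (Fin d) :=
  Matrix.toEuclideanLin M x

/-- The operator norm of a `d × d` matrix acting on Euclidean `ℂᵈ`. -/
def matOpNorm {d : ℕ} (M : Matrix (Fin d) (Fin d) ℂ) : ℝ :=
  ‖(Matrix.toEuclideanCLM (𝕜 := ℂ) M :
      EuclideanSpace ℂ (Fin d) →L[ℂ] EuclideanSpace ℂ (Fin d))‖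

open scoped Classical in
/-- The real power `M ^ t` of a positive definite (Hermitian) matrix, defined through the
spectral functional calculus; junk value `1` if `M` is not positive definite. -/
def matRpow {d : ℕ} (M : Matrix (Fin d) (Fin d) ℂ) (t : ℝ) : Matrix (Fin d) (Fin d) ℂ :=
  if h : M.PosDef then h.1.cfc (fun x => x ^ t) else 1

/-- A matrix weight: measurable, a.e. positive definite (hence invertible self-adjoint),
with `W` and `W⁻¹` locally integrable. -/
def IsMatrixWeight {n d : ℕ} (W : Cspace n → Matrix (Fin d) (Fin d) ℂ) : Prop :=
  (∀ i j, Measurable fun z => W z i j) ∧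
  (∀ᵐ z ∂(volume : Measure (Cspace n)), (W z).PosDef) ∧
  (∀ i j, LocallyIntegrable (fun z => W z i j) volume) ∧
  (∀ i j, LocallyIntegrable (fun z => (W z)⁻¹ i j) volume)

/-- The Gaussian density `(α/π)^n e^{-α|u|²}`. -/
def gaussDensity {n : ℕ} (α : ℝ) (u : Cspace n) : ℝ :=
  (α / Real.pi) ^ n * Real.exp (-α * ‖u‖ ^ 2)

/-- The `L^p_α`-norm `(∫ ‖f(z)‖^p e^{-(pα/2)|z|²} dv(z))^{1/p}` (value in `ℝ≥0∞`). -/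
def lpNormGen {E : Type*} [NormedAddCommGroup E] {n : ℕ} (α p : ℝ) (f : Cspace n → E) : ℝ≥0∞ :=
  (∫⁻ z, (‖f z‖₊ : ℝ≥0∞) ^ p * ENNReal.ofReal (Real.exp (-(p * α / 2) * ‖z‖ ^ 2))) ^ (1 / p)

/-- The norm of `L^p_{α,W}(ℂⁿ;ℂᵈ)`. -/
def wLpNorm {n d : ℕ} (α p : ℝ) (W : Cspace n → Matrix (Fin d) (Fin d) ℂ)
    (f : Cspace n → EuclideanSpace ℂ (Fin d)) : ℝ≥0∞ :=
  lpNormGen α p (fun z => matAct (matRpow (W z) (1 / p)) (f z))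

/-- The norm of `L^∞_{α,V}(ℂⁿ;ℂᵈ)`: `ess sup |V(z) f(z)| e^{-(α/2)|z|²}`. -/
def wLinfNorm {n d : ℕ} (α : ℝ) (V : Cspace n → Matrix (Fin d) (Fin d) ℂ)
    (f : Cspace n → EuclideanSpace ℂ (Fin d)) : ℝ≥0∞ :=
  essSup (fun z => (‖matAct (V z) (f z)‖₊ : ℝ≥0∞) *
    ENNReal.ofReal (Real.exp (-(α / 2) * ‖z‖ ^ 2))) volume

/-- The Fock projection `P_α f(z) = ∫ f(u) e^{α⟨z,u⟩} dλ_α(u)`. -/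
def fockProj {n d : ℕ} (α : ℝ) (f : Cspace n → EuclideanSpace ℂ (Fin d)) :
    Cspace n → EuclideanSpace ℂ (Fin d) :=
  fun z => ∫ u, gaussDensity α u • (Complex.exp ((α : ℂ) * (inner ℂ u z : ℂ)) • f u)

/-- The maximal Fock projection
`P⁺_{α,W} f(z) = ∫ |W^{1/p}(z) W^{-1/p}(u) f(u)| |e^{α⟨z,u⟩}| dλ_α(u)`. -/
def maxFockProj {n d : ℕ} (α p : ℝ) (W : Cspace n → Matrix (Fin d) (Fin d) ℂ)
    (f : Cspace n → EuclideanSpace ℂ (Fin d)) : Cspace n → ℝ :=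
  fun z => ∫ u, gaussDensity α u *
    (‖matAct (matRpow (W z) (1 / p)) (matAct (matRpow (W u) (-(1 / p))) (f u))‖ *
      ‖Complex.exp ((α : ℂ) * (inner ℂ u z : ℂ))‖)

/-- `P_α` is bounded on `L^p_{α,W}(ℂⁿ;ℂᵈ)` with constant `C`. -/
def FockProjBdd {n d : ℕ} (α p : ℝ) (W : Cspace n → Matrix (Fin d) (Fin d) ℂ) (C : ℝ) : Prop :=
  ∀ f : Cspace n → EuclideanSpace ℂ (Fin d), Measurable f → wLpNorm α p W f < ⊤ →
    wLpNorm α p W (fockProj α f) ≤ ENNReal.ofReal C * wLpNorm α p W f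

/-- `P⁺_{α,W}` is bounded from `L^p_α(ℂⁿ;ℂᵈ)` to `L^p_α(ℂⁿ;ℂ)` with constant `C`. -/
def MaxFockProjBdd {n d : ℕ} (α p : ℝ) (W : Cspace n → Matrix (Fin d) (Fin d) ℂ) (C : ℝ) : Prop :=
  ∀ f : Cspace n → EuclideanSpace ℂ (Fin d), Measurable f → lpNormGen α p f < ⊤ →
    lpNormGen α p (maxFockProj α p W f) ≤ ENNReal.ofReal C * lpNormGen α p f

/-- The normalized reproducing kernel `k^α_u(z) = e^{α⟨z,u⟩ - (α/2)|u|²}`. -/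
def fockKernel {n : ℕ} (α : ℝ) (u : Cspace n) (z : Cspace n) : ℂ :=
  Complex.exp ((α : ℂ) * (inner ℂ u z : ℂ) - ((α / 2 * ‖u‖ ^ 2 : ℝ) : ℂ))

/-- The operator `P_{α,u,r} f = χ_{Q_r(u)} k^α_u ∫_{Q_r(u)} f conj(k^α_u) dλ_α`. -/
def cubeProj {n d : ℕ} (α : ℝ) (u : Cspace n) (r : ℝ)
    (f : Cspace n → EuclideanSpace ℂ (Fin d)) : Cspace n → EuclideanSpace ℂ (Fin d) :=
  fun z => Set.indicator (cube u r)
    (fun w => fockKernel α u w •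
      (∫ ζ in cube u r, gaussDensity α ζ • ((starRingEnd ℂ) (fockKernel α u ζ) • f ζ))) z

/-- The pairing `⟨f,g⟩_α = ∫ ⟨f(z), g(z)⟩ e^{-α|z|²} dv(z)` (the inner product being linear
in the first slot and conjugate-linear in the second one). -/
def fockPairing {n d : ℕ} (α : ℝ) (f g : Cspace n → EuclideanSpace ℂ (Fin d)) : ℂ :=
  ∫ z, Real.exp (-α * ‖z‖ ^ 2) • (inner ℂ (g z) (f z) : ℂ)

/-- A norm on `ℂᵈ` (as a real-valued function). -/
def IsANorm {d : ℕ} (g : EuclideanSpace ℂ (Fin d) → ℝ) : Prop :=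
  (∀ x, x ≠ 0 → 0 < g x) ∧ (∀ (c : ℂ) x, g (c • x) = ‖c‖ * g x) ∧
  (∀ x y, g (x + y) ≤ g x + g y)

/-- A metric: a measurable family of norms on `ℂᵈ` indexed by `ℂⁿ`. -/
def IsMetric {n d : ℕ} (ρ : Cspace n → EuclideanSpace ℂ (Fin d) → ℝ) : Prop :=
  (∀ z, IsANorm (ρ z)) ∧ (∀ x, Measurable fun z => ρ z x)

/-- The dual norm `ρ*(x) = sup_{y ≠ 0} |⟨x,y⟩| / ρ(y)` (value in `ℝ≥0∞`). -/
def dualNormE {d : ℕ} (g : EuclideanSpace ℂ (Fin d) → ℝ) (x : EuclideanSpace ℂ (Fin d)) :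
    ℝ≥0∞ :=
  ⨆ (y : EuclideanSpace ℂ (Fin d)) (_ : y ≠ 0),
    (‖(inner ℂ y x : ℂ)‖₊ : ℝ≥0∞) / ENNReal.ofReal (g y)

/-- The dual of an `ℝ≥0∞`-valued gauge on `ℂᵈ`. -/
def dualGaugeE {d : ℕ} (G : EuclideanSpace ℂ (Fin d) → ℝ≥0∞) (x : EuclideanSpace ℂ (Fin d)) :
    ℝ≥0∞ :=
  ⨆ (y : EuclideanSpace ℂ (Fin d)) (_ : y ≠ 0), (‖(inner ℂ y x : ℂ)‖₊ : ℝ≥0∞) / G y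

/-- The `q`-average of an `ℝ≥0∞`-valued gauge family over a set `Q`:
`((1/v(Q)) ∫_Q F_z(x)^q dv(z))^{1/q}`. -/
def avgGauge {n d : ℕ} (q : ℝ) (Q : Set (Cspace n))
    (F : Cspace n → EuclideanSpace ℂ (Fin d) → ℝ≥0∞) (x : EuclideanSpace ℂ (Fin d)) : ℝ≥0∞ :=
  ((∫⁻ z in Q, (F z x) ^ q) / volume Q) ^ (1 / q)

/-- The averaged norm `ρ_{q,Q}(x) = ((1/v(Q)) ∫_Q ρ_z(x)^q dv(z))^{1/q}`. -/
def metricAvg {n d : ℕ} (q : ℝ) (Q : Set (Cspace n))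
    (ρ : Cspace n → EuclideanSpace ℂ (Fin d) → ℝ) (x : EuclideanSpace ℂ (Fin d)) : ℝ≥0∞ :=
  avgGauge q Q (fun z y => ENNReal.ofReal (ρ z y)) x

/-- The averaged dual norm `ρ*_{p',Q}` where `p'` is the conjugate exponent of `p`
(`ess sup` over `Q` of the pointwise dual norms when `p = 1`, i.e. `p' = ∞`). -/
def metricDualAvg {n d : ℕ} (p : ℝ) (Q : Set (Cspace n))
    (ρ : Cspace n → EuclideanSpace ℂ (Fin d) → ℝ) (x : EuclideanSpace ℂ (Fin d)) : ℝ≥0∞ :=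
  if p = 1 then essSup (fun z => dualNormE (ρ z) x) (volume.restrict Q)
  else avgGauge (p / (p - 1)) Q (fun z => dualNormE (ρ z)) x

/-- The `A_{p,r}`-condition for a metric `ρ`, with constant `C`:
`ρ*_{p',Q}(x) ≤ C (ρ_{p,Q})*(x)` for all `x ∈ ℂᵈ` and all cubes `Q` of side length `r`. -/
def IsAprBound {n d : ℕ} (p r : ℝ) (ρ : Cspace n → EuclideanSpace ℂ (Fin d) → ℝ) (C : ℝ) :
    Prop :=
  ∀ (u : Cspace n) (x : EuclideanSpace ℂ (Fin d)),
    metricDualAvg p (cube u r) ρ x ≤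
      ENNReal.ofReal C * dualGaugeE (metricAvg p (cube u r) ρ) x

/-- `ρ` is an `A_{p,r}`-metric. -/
def IsAprMetric {n d : ℕ} (p r : ℝ) (ρ : Cspace n → EuclideanSpace ℂ (Fin d) → ℝ) : Prop :=
  ∃ C : ℝ, 0 ≤ C ∧ IsAprBound p r ρ C

/-- The metric `ρ_z(x) = |W^{1/p}(z) x|` associated with a matrix weight `W`. -/
def weightMetric {n d : ℕ} (p : ℝ) (W : Cspace n → Matrix (Fin d) (Fin d) ℂ) :
    Cspace n → EuclideanSpace ℂ (Fin d) → ℝ :=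
  fun z x => ‖matAct (matRpow (W z) (1 / p)) x‖

/-- `W` is an `A_{p,r}`-weight. -/
def IsAprWeight {n d : ℕ} (p r : ℝ) (W : Cspace n → Matrix (Fin d) (Fin d) ℂ) : Prop :=
  IsAprMetric p r (weightMetric p W)

end

noncomputable def latticePt {n : ℕ} (r : ℝ) (m : Fin n → ℤ × ℤ) : Cspace n :=
  (WithLp.equiv 2 (Fin n → ℂ)).symm fun j => ⟨r * ((m j).1 : ℝ), r * ((m j).2 : ℝ)⟩

/-!
If `R` is a reducing operator for a norm `N` on `ℂᵈ`, then `|R⁻¹ x| ≤ N*(x) ≤ √d |R⁻¹ x|`, so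
`‖R_{Q_r(ν)} R_{Q_r(ν')}⁻¹‖ = ‖R_{Q_r(ν')}⁻¹ R_{Q_r(ν)}‖` is controlled by comparing the dual
norms `(ρ_{p,Q})*` of neighbouring cubes. By Hölder, `(ρ_{p,Q'})* ≤ ρ*_{p',Q'}`; if `Q'` is a
neighbour of `Q`, both lie in the tripled cube `3Q`, whose volume is `3^{2n}` times larger, so
passing from `Q'` to `3Q` and back to `Q` costs `3^{2n(1/p')}` and `3^{2n(1/p)}`, while the
`A_{p,3r}` condition on `3Q` costs `A`. Chaining over at most `|ν - ν'|/r` diagonal lattice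
steps gives the bound. Taking `Q' = Q` in the one-step estimate shows `3^{2n} A ≥ 1`, which is
what makes a real exponent larger than the number of steps harmless.
-/

section Cube

variable {n : ℕ}

lemma volume_square_complex (a b c : ℝ) :
    volume {z : ℂ | |z.re - a| ≤ c ∧ |z.im - b| ≤ c} = ENNReal.ofReal (2 * c) ^ 2 := by
  have hset : {z : ℂ | |z.re - a| ≤ c ∧ |z.im - b| ≤ c} = Complex.measurableEquivRealProd ⁻¹'
      (Set.Icc (a - c) (a + c) ×ˢ Set.Icc (b - c) (b + c)) := by
    ext z
    simp only [Set.mem_ofPred_eq, Set.mem_preimage, Complex.measurableEquivRealProd_apply,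
      Set.mem_prod, Set.mem_Icc, abs_sub_le_iff]
    constructor <;> rintro ⟨⟨h1, h2⟩, h3, h4⟩ <;> refine ⟨⟨?_, ?_⟩, ?_, ?_⟩ <;> linarith
  rw [hset, Complex.volume_preserving_equiv_real_prod.measure_preimage
    (measurableSet_Icc.prod measurableSet_Icc).nullMeasurableSet, Measure.volume_eq_prod,
    Measure.prod_prod, Real.volume_Icc, Real.volume_Icc, sq]
  ring_nf

lemma volume_cube (u : Cspace n) (s : ℝ) : volume (cube u s) = ENNReal.ofReal s ^ (2 * n) := by
  have hpi : WithLp.toLp 2 ⁻¹' cube u s = Set.univ.pi fun j =>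
      {z : ℂ | |z.re - (u j).re| ≤ s / 2 ∧ |z.im - (u j).im| ≤ s / 2} := by
    ext z
    simp [cube, Set.mem_pi]
  change Measure.map (WithLp.toLp 2) (volume : Measure (Fin n → ℂ)) (cube u s) = _
  rw [← MeasurableEquiv.coe_toLp, MeasurableEquiv.map_apply, MeasurableEquiv.coe_toLp, hpi,
    volume_pi_pi]
  simp only [volume_square_complex, mul_div_cancel₀ s two_ne_zero, Finset.prod_const,
    Finset.card_univ, Fintype.card_fin, pow_mul]

lemma volume_cube_ne_zero (u : Cspace n) {s : ℝ} (hs : 0 < s) : volume (cube u s) ≠ 0 := by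
  rw [volume_cube]
  exact pow_ne_zero _ (ENNReal.ofReal_pos.2 hs).ne'

lemma volume_cube_ne_top (u : Cspace n) (s : ℝ) : volume (cube u s) ≠ ∞ := by
  simp [volume_cube]

lemma volume_cube_three_mul (u : Cspace n) (s : ℝ) :
    volume (cube u (3 * s)) = ENNReal.ofReal (3 ^ (2 * n)) * volume (cube u s) := by
  rw [volume_cube, volume_cube, ENNReal.ofReal_mul (by norm_num), mul_pow,
    ENNReal.ofReal_pow (by norm_num)]

lemma cube_subset_cube_three_mul {u u' : Cspace n} {s : ℝ}
    (h : ∀ j, |(u' j).re - (u j).re| ≤ s ∧ |(u' j).im - (u j).im| ≤ s) :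
    cube u' s ⊆ cube u (3 * s) := fun z hz j =>
  ⟨(abs_sub_le _ (u' j).re _).trans (by linarith [(hz j).1, (h j).1]),
    (abs_sub_le _ (u' j).im _).trans (by linarith [(hz j).2, (h j).2])⟩

end Cube

section Lattice

variable {n : ℕ} {r : ℝ}

lemma abs_latticePt_re_sub (hr : 0 ≤ r) (m m' : Fin n → ℤ × ℤ) (j : Fin n) :
    |(latticePt r m j).re - (latticePt r m' j).re| = r * ((m j).1 - (m' j).1).natAbs := by
  change |r * ((m j).1 : ℝ) - r * (m' j).1| = _
  rw [← mul_sub, abs_mul, abs_of_nonneg hr, Nat.cast_natAbs, Int.cast_abs, Int.cast_sub]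

lemma abs_latticePt_im_sub (hr : 0 ≤ r) (m m' : Fin n → ℤ × ℤ) (j : Fin n) :
    |(latticePt r m j).im - (latticePt r m' j).im| = r * ((m j).2 - (m' j).2).natAbs := by
  change |r * ((m j).2 : ℝ) - r * (m' j).2| = _
  rw [← mul_sub, abs_mul, abs_of_nonneg hr, Nat.cast_natAbs, Int.cast_abs, Int.cast_sub]

lemma cube_latticePt_subset (hr : 0 ≤ r) {m m' : Fin n → ℤ × ℤ}
    (h : ∀ j, ((m' j).1 - (m j).1).natAbs ≤ 1 ∧ ((m' j).2 - (m j).2).natAbs ≤ 1) :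
    cube (latticePt r m') r ⊆ cube (latticePt r m) (3 * r) := by
  refine cube_subset_cube_three_mul fun j => ?_
  rw [abs_latticePt_re_sub hr, abs_latticePt_im_sub hr]
  exact ⟨mul_le_of_le_one_right hr (by exact_mod_cast (h j).1),
    mul_le_of_le_one_right hr (by exact_mod_cast (h j).2)⟩

lemma natAbs_sub_le_floor_dist (hr : 0 < r) (m m' : Fin n → ℤ × ℤ) (j : Fin n) :
    ((m j).1 - (m' j).1).natAbs ≤ ⌊dist (latticePt r m) (latticePt r m') / r⌋₊ ∧
      ((m j).2 - (m' j).2).natAbs ≤ ⌊dist (latticePt r m) (latticePt r m') / r⌋₊ := by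
  have hj : ‖latticePt r m j - latticePt r m' j‖ ≤ dist (latticePt r m) (latticePt r m') :=
    (dist_eq_norm _ _).symm.trans_le (PiLp.dist_apply_le _ _ j)
  constructor <;> refine Nat.le_floor ((le_div_iff₀ hr).2 ?_) <;> rw [mul_comm]
  · rw [← abs_latticePt_re_sub hr.le, ← Complex.sub_re]
    exact (Complex.abs_re_le_norm _).trans hj
  · rw [← abs_latticePt_im_sub hr.le, ← Complex.sub_im]
    exact (Complex.abs_im_le_norm _).trans hj

lemma Int.natAbs_sub_sign_le {c : ℤ} {k : ℕ} (h : c.natAbs ≤ k + 1) : (c - c.sign).natAbs ≤ k := by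
  rcases lt_trichotomy c 0 with hc | rfl | hc
  · rw [Int.sign_eq_neg_one_of_neg hc]; omega
  · simp
  · rw [Int.sign_eq_one_of_pos hc]; omega

lemma Int.natAbs_sign_le_one (c : ℤ) : c.sign.natAbs ≤ 1 := by
  rcases Int.sign_trichotomy c with hc | hc | hc <;> simp [hc]

lemma le_pow_mul_of_adjacent {ι : Type*} {f : (ι → ℤ × ℤ) → ℝ≥0∞} {B : ℝ≥0∞}
    (hf : ∀ m m' : ι → ℤ × ℤ,
      (∀ j, ((m' j).1 - (m j).1).natAbs ≤ 1 ∧ ((m' j).2 - (m j).2).natAbs ≤ 1) → f m' ≤ B * f m) :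
    ∀ (k : ℕ) (m m' : ι → ℤ × ℤ),
      (∀ j, ((m j).1 - (m' j).1).natAbs ≤ k ∧ ((m j).2 - (m' j).2).natAbs ≤ k) →
        f m' ≤ B ^ k * f m
  | 0, m, m', h => by
    have : m' = m :=
      funext fun j => Prod.ext (by have := (h j).1; omega) (by have := (h j).2; omega)
    rw [this, pow_zero, one_mul]
  | k + 1, m, m', h => by
    set m'' : ι → ℤ × ℤ := fun j =>
      ((m' j).1 + ((m j).1 - (m' j).1).sign, (m' j).2 + ((m j).2 - (m' j).2).sign)
    have hstep : ∀ j, ((m' j).1 - (m'' j).1).natAbs ≤ 1 ∧ ((m' j).2 - (m'' j).2).natAbs ≤ 1 :=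
      fun j => by
        simp only [m'', sub_add_cancel_left, Int.natAbs_neg, Int.natAbs_sign_le_one, and_self]
    have hrest : ∀ j, ((m j).1 - (m'' j).1).natAbs ≤ k ∧ ((m j).2 - (m'' j).2).natAbs ≤ k :=
      fun j => by
        simp only [m'', ← sub_sub]
        exact ⟨Int.natAbs_sub_sign_le (h j).1, Int.natAbs_sub_sign_le (h j).2⟩
    calc f m' ≤ B * f m'' := hf m'' m' hstep
      _ ≤ B * (B ^ k * f m) := by gcongr; exact le_pow_mul_of_adjacent hf k m m'' hrest
      _ = B ^ (k + 1) * f m := by ring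

end Lattice

section Averages

variable {n d : ℕ} {p : ℝ} {Q Q' : Set (Cspace n)} {ρ : Cspace n → EuclideanSpace ℂ (Fin d) → ℝ}

lemma avgGauge_le_of_subset {q : ℝ} (hq : 0 < q) (F : Cspace n → EuclideanSpace ℂ (Fin d) → ℝ≥0∞)
    (x : EuclideanSpace ℂ (Fin d)) (hQQ' : Q ⊆ Q') (hQ : volume Q ≠ 0) (hQ' : volume Q' ≠ ∞)
    {K : ℝ≥0∞} (hK : volume Q' ≤ K * volume Q) :
    avgGauge q Q F x ≤ K ^ (1 / q) * avgGauge q Q' F x := by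
  unfold avgGauge
  rw [← ENNReal.mul_rpow_of_nonneg _ _ (by positivity)]
  gcongr
  set I := ∫⁻ z in Q', F z x ^ q
  have hQ'0 : volume Q' ≠ 0 := ne_bot_of_le_ne_bot hQ (measure_mono hQQ')
  calc (∫⁻ z in Q, F z x ^ q) / volume Q ≤ I / volume Q := by
        gcongr; exact lintegral_mono_set hQQ'
    _ ≤ K * (I / volume Q') := by
        rw [ENNReal.div_le_iff hQ (ne_top_of_le_ne_top hQ' (measure_mono hQQ'))]
        calc I = I / volume Q' * volume Q' := (ENNReal.div_mul_cancel hQ'0 hQ').symm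
          _ ≤ I / volume Q' * (K * volume Q) := by gcongr
          _ = K * (I / volume Q') * volume Q := by ring

lemma le_div_rpow_mul_div_rpow {c v X Y : ℝ≥0∞} {a b : ℝ} (hab : a + b = 1) (hv0 : v ≠ 0)
    (hv : v ≠ ∞) (h : c * v ≤ X * Y) : c ≤ X / v ^ a * (Y / v ^ b) := by
  rw [div_eq_mul_inv, div_eq_mul_inv, mul_mul_mul_comm,
    ← ENNReal.mul_inv (.inr (ENNReal.rpow_ne_top_of_ne_zero hv0 hv))
      (.inl (ENNReal.rpow_ne_top_of_ne_zero hv0 hv)),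
    ← ENNReal.rpow_add _ _ hv0 hv, hab, ENNReal.rpow_one, ← div_eq_mul_inv]
  exact (ENNReal.le_div_iff_mul_le (Or.inl hv0) (Or.inl hv)).2 h

lemma avgGauge_eq_div {q : ℝ} (hq : 0 < q) (Q : Set (Cspace n))
    (F : Cspace n → EuclideanSpace ℂ (Fin d) → ℝ≥0∞) (x : EuclideanSpace ℂ (Fin d)) :
    avgGauge q Q F x = (∫⁻ z in Q, F z x ^ q) ^ (1 / q) / volume Q ^ (1 / q) :=
  ENNReal.div_rpow_of_nonneg _ _ (by positivity)

lemma norm_inner_le_metricAvg_mul_metricDualAvg (hp : 1 ≤ p) (hρ : IsMetric ρ)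
    (hQ : volume Q ≠ 0) (hQ' : volume Q ≠ ∞) (u x : EuclideanSpace ℂ (Fin d)) :
    (‖(inner ℂ u x : ℂ)‖₊ : ℝ≥0∞) ≤ metricAvg p Q ρ u * metricDualAvg p Q ρ x := by
  rcases eq_or_ne u 0 with rfl | hu
  · simp
  set c : ℝ≥0∞ := (‖(inner ℂ u x : ℂ)‖₊ : ℝ≥0∞)
  set f : Cspace n → ℝ≥0∞ := fun z => ENNReal.ofReal (ρ z u)
  have hf : Measurable f := (hρ.2 u).ennreal_ofReal
  have hf0 : ∀ z, f z ≠ 0 := fun z => (ENNReal.ofReal_pos.2 ((hρ.1 z).1 u hu)).ne'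
  -- `c / f` is a measurable minorant of the (possibly non-measurable) pointwise dual norm
  have hcf : ∀ z, f z * (c / f z) = c := fun z => ENNReal.mul_div_cancel (hf0 z) ofReal_ne_top
  have hdual : ∀ z, c / f z ≤ dualNormE (ρ z) x := fun z => le_iSup₂_of_le u hu le_rfl
  have hcv : ∫⁻ z in Q, f z * (c / f z) = c * volume Q := by simp only [hcf, setLIntegral_const]
  rcases hp.eq_or_lt with rfl | hp1
  · set S := essSup (fun z => dualNormE (ρ z) x) (volume.restrict Q)
    have hS : c * volume Q ≤ (∫⁻ z in Q, f z ^ (1 : ℝ)) ^ (1 / (1 : ℝ)) * S := by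
      simp only [ENNReal.rpow_one, div_one, ← hcv, ← lintegral_mul_const _ hf]
      refine lintegral_mono_ae ?_
      filter_upwards [ae_le_essSup (fun z => dualNormE (ρ z) x)] with z hz
      gcongr
      exact (hdual z).trans hz
    have := le_div_rpow_mul_div_rpow (a := 1 / 1) (b := 0) (by norm_num) hQ hQ' hS
    simpa [metricDualAvg, metricAvg, avgGauge_eq_div one_pos] using this
  · have hpq : p.HolderConjugate (p / (p - 1)) := .conjExponent hp1
    have hH : c * volume Q ≤ (∫⁻ z in Q, f z ^ p) ^ (1 / p) *
        (∫⁻ z in Q, dualNormE (ρ z) x ^ (p / (p - 1))) ^ (1 / (p / (p - 1))) := by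
      rw [← hcv]
      refine (ENNReal.lintegral_mul_le_Lp_mul_Lq _ hpq hf.aemeasurable
        (measurable_const.div hf).aemeasurable).trans ?_
      gcongr with z
      exact hdual z
    rw [metricDualAvg, if_neg hp1.ne', metricAvg, avgGauge_eq_div hpq.pos,
      avgGauge_eq_div hpq.symm.pos]
    exact le_div_rpow_mul_div_rpow (by simpa [one_div] using hpq.inv_add_inv_eq_one) hQ hQ' hH

end Averages

section Duality

variable {n d : ℕ} {p : ℝ} {Q Q' : Set (Cspace n)} {ρ : Cspace n → EuclideanSpace ℂ (Fin d) → ℝ}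

lemma dualGaugeE_metricAvg_le_metricDualAvg (hp : 1 ≤ p) (hρ : IsMetric ρ)
    (hQ : volume Q ≠ 0) (hQ' : volume Q ≠ ∞) (x : EuclideanSpace ℂ (Fin d)) :
    dualGaugeE (metricAvg p Q ρ) x ≤ metricDualAvg p Q ρ x :=
  iSup₂_le fun u _ => ENNReal.div_le_of_le_mul <| by
    rw [mul_comm]; exact norm_inner_le_metricAvg_mul_metricDualAvg hp hρ hQ hQ' u x

lemma dualGaugeE_le_mul {G G' : EuclideanSpace ℂ (Fin d) → ℝ≥0∞} {K : ℝ≥0∞} (hK0 : K ≠ 0)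
    (hK : K ≠ ∞) (h : ∀ y, G y ≤ K * G' y) (x : EuclideanSpace ℂ (Fin d)) :
    dualGaugeE G' x ≤ K * dualGaugeE G x := by
  refine iSup₂_le fun y hy => ?_
  calc (‖(inner ℂ y x : ℂ)‖₊ : ℝ≥0∞) / G' y
      = K * (‖(inner ℂ y x : ℂ)‖₊ : ℝ≥0∞) / (K * G' y) := (ENNReal.mul_div_mul_left _ _ hK0 hK).symm
    _ ≤ K * (‖(inner ℂ y x : ℂ)‖₊ : ℝ≥0∞) / G y := ENNReal.div_le_div_left (h y) _
    _ ≤ K * dualGaugeE G x := by rw [mul_div_assoc]; gcongr; exact le_iSup₂_of_le y hy le_rfl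

lemma metricDualAvg_le_of_subset (hp : 1 ≤ p) (hQQ' : Q ⊆ Q') (hQ : volume Q ≠ 0)
    (hQ' : volume Q' ≠ ∞) {K : ℝ≥0∞} (hK : volume Q' ≤ K * volume Q)
    (x : EuclideanSpace ℂ (Fin d)) :
    metricDualAvg p Q ρ x ≤ K ^ (1 - 1 / p) * metricDualAvg p Q' ρ x := by
  rcases hp.eq_or_lt with rfl | hp1
  · simp only [metricDualAvg, if_pos, div_one, sub_self, ENNReal.rpow_zero, one_mul]
    exact essSup_mono_measure' (Measure.restrict_mono hQQ' le_rfl)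
  · have hq : 1 - 1 / p = 1 / (p / (p - 1)) := by field_simp
    rw [metricDualAvg, metricDualAvg, if_neg hp1.ne', if_neg hp1.ne', hq]
    exact avgGauge_le_of_subset (div_pos (by linarith) (by linarith)) _ x hQQ' hQ hQ' hK

lemma IsAprBound.dualGaugeE_metricAvg_le {s A : ℝ} (h3s : IsAprBound p (3 * s) ρ A) (hp : 1 ≤ p)
    (hs : 0 < s) (hρ : IsMetric ρ) {u u' : Cspace n} (hu : cube u' s ⊆ cube u (3 * s))
    (x : EuclideanSpace ℂ (Fin d)) :
    dualGaugeE (metricAvg p (cube u' s) ρ) x ≤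
      ENNReal.ofReal (3 ^ (2 * n) * A) * dualGaugeE (metricAvg p (cube u s) ρ) x := by
  set K : ℝ≥0∞ := ENNReal.ofReal (3 ^ (2 * n))
  have hK0 : K ≠ 0 := (ENNReal.ofReal_pos.2 (by positivity)).ne'
  have hvol : volume (cube u (3 * s)) = K * volume (cube u s) := volume_cube_three_mul u s
  have hvol' : volume (cube u' s) = volume (cube u s) := by rw [volume_cube, volume_cube]
  have hself : cube u s ⊆ cube u (3 * s) := cube_subset_cube_three_mul fun j => by simp [hs.le]
  have hp0 : 0 < p := by linarith
  calc dualGaugeE (metricAvg p (cube u' s) ρ) x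
      ≤ metricDualAvg p (cube u' s) ρ x := dualGaugeE_metricAvg_le_metricDualAvg hp hρ
        (volume_cube_ne_zero u' hs) (volume_cube_ne_top u' s) x
    _ ≤ K ^ (1 - 1 / p) * metricDualAvg p (cube u (3 * s)) ρ x :=
        metricDualAvg_le_of_subset hp hu (volume_cube_ne_zero u' hs)
          (volume_cube_ne_top u _) (by rw [hvol, hvol']) x
    _ ≤ K ^ (1 - 1 / p) * (ENNReal.ofReal A * dualGaugeE (metricAvg p (cube u (3 * s)) ρ) x) := by
        gcongr; exact h3s u x
    _ ≤ K ^ (1 - 1 / p) * (ENNReal.ofReal A *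
          (K ^ (1 / p) * dualGaugeE (metricAvg p (cube u s) ρ) x)) := by
        gcongr
        refine dualGaugeE_le_mul (ENNReal.rpow_pos (pos_iff_ne_zero.2 hK0) ofReal_ne_top).ne'
          (ENNReal.rpow_ne_top_of_nonneg (by positivity) ofReal_ne_top) (fun y => ?_) x
        exact avgGauge_le_of_subset hp0 _ y hself (volume_cube_ne_zero u hs)
          (volume_cube_ne_top u _) hvol.le
    _ = K ^ (1 - 1 / p) * K ^ (1 / p) * ENNReal.ofReal A *
          dualGaugeE (metricAvg p (cube u s) ρ) x := by ring
    _ = ENNReal.ofReal (3 ^ (2 * n) * A) * dualGaugeE (metricAvg p (cube u s) ρ) x := by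
        rw [← ENNReal.rpow_add _ _ hK0 ofReal_ne_top, sub_add_cancel, ENNReal.rpow_one,
          ENNReal.ofReal_mul (by positivity)]

end Duality

section Matrices

open scoped Matrix

variable {d : ℕ}

lemma matAct_mul (M N : Matrix (Fin d) (Fin d) ℂ) (x : EuclideanSpace ℂ (Fin d)) :
    matAct (M * N) x = matAct M (matAct N x) := by
  change Matrix.toEuclideanCLM (𝕜 := ℂ) (M * N) x = _
  rw [map_mul]
  rfl

lemma matAct_one (x : EuclideanSpace ℂ (Fin d)) : matAct 1 x = x := by
  simp [matAct]

lemma matAct_matAct_inv {M : Matrix (Fin d) (Fin d) ℂ} (hM : IsUnit M.det)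
    (x : EuclideanSpace ℂ (Fin d)) : matAct M (matAct M⁻¹ x) = x := by
  rw [← matAct_mul, Matrix.mul_nonsing_inv _ hM, matAct_one]

lemma matAct_inv_matAct {M : Matrix (Fin d) (Fin d) ℂ} (hM : IsUnit M.det)
    (x : EuclideanSpace ℂ (Fin d)) : matAct M⁻¹ (matAct M x) = x := by
  rw [← matAct_mul, Matrix.nonsing_inv_mul _ hM, matAct_one]

lemma inner_matAct_left (M : Matrix (Fin d) (Fin d) ℂ) (v y : EuclideanSpace ℂ (Fin d)) :
    (inner ℂ (matAct M v) y : ℂ) = inner ℂ v (matAct Mᴴ y) := by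
  simp only [matAct, Matrix.toEuclideanLin_conjTranspose_eq_adjoint, LinearMap.adjoint_inner_right]

lemma matOpNorm_conjTranspose (M : Matrix (Fin d) (Fin d) ℂ) : matOpNorm Mᴴ = matOpNorm M := by
  rw [matOpNorm, matOpNorm, ← Matrix.star_eq_conjTranspose, map_star,
    ContinuousLinearMap.star_eq_adjoint, LinearIsometryEquiv.norm_map]

lemma matOpNorm_le {M : Matrix (Fin d) (Fin d) ℂ} {C : ℝ} (hC : 0 ≤ C)
    (h : ∀ x, ‖matAct M x‖ ≤ C * ‖x‖) : matOpNorm M ≤ C :=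
  ContinuousLinearMap.opNorm_le_bound _ hC h

end Matrices

section ReducingOperator

variable {d : ℕ}

def IsReducingOperator (G : EuclideanSpace ℂ (Fin d) → ℝ≥0∞) (M : Matrix (Fin d) (Fin d) ℂ) :
    Prop :=
  M.PosDef ∧ ∀ x, G x ≤ ENNReal.ofReal ‖matAct M x‖ ∧
    ENNReal.ofReal ‖matAct M x‖ ≤ ENNReal.ofReal (Real.sqrt d) * G x

namespace IsReducingOperator

variable {G G' : EuclideanSpace ℂ (Fin d) → ℝ≥0∞} {M M' : Matrix (Fin d) (Fin d) ℂ}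

lemma isUnit_det (hM : IsReducingOperator G M) : IsUnit M.det :=
  (Matrix.isUnit_iff_isUnit_det _).1 hM.1.isUnit

lemma ofReal_norm_matAct_inv_le (hM : IsReducingOperator G M) (x : EuclideanSpace ℂ (Fin d)) :
    ENNReal.ofReal ‖matAct M⁻¹ x‖ ≤ dualGaugeE G x := by
  set w := matAct M⁻¹ x
  rcases eq_or_ne w 0 with hw | hw
  · simp [hw]
  -- test against `v = M⁻¹ w`, for which `⟨v, x⟩ = |w|²` and `G v ≤ |M v| = |w|`
  set v := matAct M⁻¹ w
  have hMv : matAct M v = w := matAct_matAct_inv hM.isUnit_det w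
  have hv : v ≠ 0 := by
    rintro h
    rw [← hMv, h, matAct, map_zero] at hw
    exact hw rfl
  have hvx : (inner ℂ v x : ℂ) = (‖w‖ : ℂ) ^ 2 := by
    rw [inner_matAct_left, hM.1.1.inv.eq, inner_self_eq_norm_sq_to_K]
    norm_cast
  calc ENNReal.ofReal ‖w‖ = ENNReal.ofReal (‖w‖ ^ 2) / ENNReal.ofReal ‖w‖ := by
        rw [← ENNReal.ofReal_div_of_pos (norm_pos_iff.2 hw), sq, mul_div_cancel_right₀ _
          (norm_ne_zero_iff.2 hw)]
    _ ≤ (‖(inner ℂ v x : ℂ)‖₊ : ℝ≥0∞) / G v := by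
        gcongr
        · rw [hvx, ← enorm_eq_nnnorm, ← ofReal_norm, norm_pow, Complex.norm_real, norm_norm]
        · rw [← hMv]; exact (hM.2 v).1
    _ ≤ dualGaugeE G x := le_iSup₂_of_le v hv le_rfl

lemma dualGaugeE_le_ofReal_norm_matAct_inv (hM : IsReducingOperator G M)
    (x : EuclideanSpace ℂ (Fin d)) :
    dualGaugeE G x ≤ ENNReal.ofReal (Real.sqrt d) * ENNReal.ofReal ‖matAct M⁻¹ x‖ := by
  refine iSup₂_le fun v _ => ENNReal.div_le_of_le_mul ?_
  have hvx : (inner ℂ v x : ℂ) = inner ℂ (matAct M v) (matAct M⁻¹ x) := by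
    rw [inner_matAct_left, hM.1.1.eq, matAct_matAct_inv hM.isUnit_det]
  calc (‖(inner ℂ v x : ℂ)‖₊ : ℝ≥0∞)
      ≤ ENNReal.ofReal ‖matAct M⁻¹ x‖ * ENNReal.ofReal ‖matAct M v‖ := by
        rw [hvx, ← enorm_eq_nnnorm, ← ofReal_norm, ← ENNReal.ofReal_mul (norm_nonneg _), mul_comm]
        exact ENNReal.ofReal_le_ofReal (norm_inner_le_norm _ _)
    _ ≤ ENNReal.ofReal ‖matAct M⁻¹ x‖ * (ENNReal.ofReal (Real.sqrt d) * G v) := by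
        gcongr; exact (hM.2 v).2
    _ = _ := by ring

lemma one_le_of_dualGaugeE_le_mul (hM : IsReducingOperator G M) (hd : 0 < d) {B : ℝ≥0∞}
    (h : ∀ x, dualGaugeE G x ≤ B * dualGaugeE G x) : 1 ≤ B := by
  set y : EuclideanSpace ℂ (Fin d) := EuclideanSpace.single ⟨0, hd⟩ 1
  have hy : y ≠ 0 := by simp [y]
  set x := matAct M y
  have hx : matAct M⁻¹ x = y := matAct_inv_matAct hM.isUnit_det y
  have h0 : dualGaugeE G x ≠ 0 := by
    refine (lt_of_lt_of_le ?_ (hM.ofReal_norm_matAct_inv_le x)).ne'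
    rwa [hx, ENNReal.ofReal_pos, norm_pos_iff]
  have htop : dualGaugeE G x ≠ ∞ :=
    ne_top_of_le_ne_top (by finiteness) (hM.dualGaugeE_le_ofReal_norm_matAct_inv x)
  exact (ENNReal.mul_le_mul_iff_left h0 htop).1 (by rw [one_mul]; exact h x)

lemma matOpNorm_mul_inv_le (hM : IsReducingOperator G M) (hM' : IsReducingOperator G' M')
    {C : ℝ} (hC : 0 ≤ C) (h : ∀ x, dualGaugeE G' x ≤ ENNReal.ofReal C * dualGaugeE G x) :
    matOpNorm (M * M'⁻¹) ≤ Real.sqrt d * C := by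
  -- `(M M'⁻¹)ᴴ = M'⁻¹ M`, and `|M'⁻¹ y| ≤ G'*(y) ≤ C G*(y) ≤ C √d |M⁻¹ y|` with `y = M w`
  rw [← matOpNorm_conjTranspose, Matrix.conjTranspose_mul, hM.1.1.eq, hM'.1.1.inv.eq]
  refine matOpNorm_le (by positivity) fun w => ?_
  rw [matAct_mul]
  refine (ENNReal.ofReal_le_ofReal_iff (by positivity)).1 ?_
  calc ENNReal.ofReal ‖matAct M'⁻¹ (matAct M w)‖ ≤ dualGaugeE G' (matAct M w) :=
        hM'.ofReal_norm_matAct_inv_le _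
    _ ≤ ENNReal.ofReal C * (ENNReal.ofReal (Real.sqrt d) *
          ENNReal.ofReal ‖matAct M⁻¹ (matAct M w)‖) :=
        (h _).trans (by gcongr; exact hM.dualGaugeE_le_ofReal_norm_matAct_inv _)
    _ = ENNReal.ofReal (Real.sqrt d * C * ‖w‖) := by
        rw [matAct_inv_matAct hM.isUnit_det, ← ENNReal.ofReal_mul (Real.sqrt_nonneg _),
          ← ENNReal.ofReal_mul hC]
        ring_nf

end IsReducingOperator

end ReducingOperator

theorem stmt14_general {n d : ℕ} (hn : 0 < n) (hd : 0 < d) (r p : ℝ) (hr : 0 < r) (hp : 1 ≤ p)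
    (ρ : Cspace n → EuclideanSpace ℂ (Fin d) → ℝ) (hρ : IsMetric ρ)
    (A : ℝ) (h3r : IsAprBound p (3 * r) ρ A)
    (R : (Fin n → ℤ × ℤ) → Matrix (Fin d) (Fin d) ℂ)
    (hRpos : ∀ m, (R m).PosDef)
    (hR : ∀ m x, metricAvg p (cube (latticePt r m) r) ρ x ≤
        ENNReal.ofReal ‖matAct (R m) x‖ ∧
      ENNReal.ofReal ‖matAct (R m) x‖ ≤
        ENNReal.ofReal (Real.sqrt d) * metricAvg p (cube (latticePt r m) r) ρ x) :
    ∀ m m' : Fin n → ℤ × ℤ,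
      matOpNorm (R m * (R m')⁻¹) ≤
        Real.sqrt d * ((3 : ℝ) ^ (2 * n) * A) ^
          ((Real.sqrt (2 * n) / r) * dist (latticePt r m) (latticePt r m')) := by
  intro m m'
  set N := fun i x => metricAvg p (cube (latticePt r i) r) ρ x
  set B : ℝ := 3 ^ (2 * n) * A
  have hred : ∀ m, IsReducingOperator (N m) (R m) := fun m => ⟨hRpos m, hR m⟩
  have hadj : ∀ m m' : Fin n → ℤ × ℤ,
      (∀ j, ((m' j).1 - (m j).1).natAbs ≤ 1 ∧ ((m' j).2 - (m j).2).natAbs ≤ 1) →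
        ∀ x, dualGaugeE (N m') x ≤ ENNReal.ofReal B * dualGaugeE (N m) x :=
    fun m m' h => h3r.dualGaugeE_metricAvg_le hp hr hρ (cube_latticePt_subset hr.le h)
  have hB : 1 ≤ B := ENNReal.one_le_ofReal.1 <|
    (hred m).one_le_of_dualGaugeE_le_mul hd (hadj m m fun j => by simp)
  set k := ⌊dist (latticePt r m) (latticePt r m') / r⌋₊
  have hk : (k : ℝ) ≤ Real.sqrt (2 * n) / r * dist (latticePt r m) (latticePt r m') := by
    have h2n : 1 ≤ Real.sqrt (2 * n) := Real.one_le_sqrt.2 (by norm_cast; omega)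
    rw [div_mul_eq_mul_div, mul_div_assoc]
    exact (Nat.floor_le (by positivity)).trans (le_mul_of_one_le_left (by positivity) h2n)
  calc matOpNorm (R m * (R m')⁻¹) ≤ Real.sqrt d * B ^ k :=
        (hred m).matOpNorm_mul_inv_le (hred m') (by positivity) fun x => by
          rw [ENNReal.ofReal_pow (by linarith)]
          exact le_pow_mul_of_adjacent (fun m m' h => hadj m m' h x) k m m'
            (natAbs_sub_le_floor_dist hr m m')
    _ ≤ Real.sqrt d * B ^ (Real.sqrt (2 * n) / r * dist (latticePt r m) (latticePt r m')) := by
        rw [← Real.rpow_natCast]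
        gcongr

/-- Lemma `nunu'`, second part: if `ρ` is an `A_{p,3r}`-metric with
reducing operators `R_{Q_r(ν)}` for `ρ_{p,Q_r(ν)}`, then for all `ν, ν' ∈ rℤ^{2n}`,
`‖R_{Q_r(ν)} R_{Q_r(ν')}⁻¹‖ ≤ √d (3^{2n} A_{p,3r}(ρ))^{(√(2n)/r)|ν-ν'|}`. -/
theorem stmt14 {n d : ℕ} (hn : 0 < n) (hd : 0 < d) (r p : ℝ) (hr : 0 < r) (hp : 1 ≤ p)
    (ρ : Cspace n → EuclideanSpace ℂ (Fin d) → ℝ) (hρ : IsMetric ρ)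
    (A : ℝ) (hA : 0 ≤ A) (h3r : IsAprBound p (3 * r) ρ A)
    (R : (Fin n → ℤ × ℤ) → Matrix (Fin d) (Fin d) ℂ)
    (hRpos : ∀ m, (R m).PosDef)
    (hR : ∀ m x, metricAvg p (cube (latticePt r m) r) ρ x ≤
        ENNReal.ofReal ‖matAct (R m) x‖ ∧
      ENNReal.ofReal ‖matAct (R m) x‖ ≤
        ENNReal.ofReal (Real.sqrt d) * metricAvg p (cube (latticePt r m) r) ρ x) :
    ∀ m m' : Fin n → ℤ × ℤ,
      matOpNorm (R m * (R m')⁻¹) ≤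
        Real.sqrt d * ((3 : ℝ) ^ (2 * n) * A) ^
          ((Real.sqrt (2 * n) / r) * dist (latticePt r m) (latticePt r m')) :=
  stmt14_general hn hd r p hr hp ρ hρ A h3r R hRpos hR
end

section
/- Let α,r>0, u∈ℂⁿ, and x∈ℂᵈ, and set f = χ_{Q_r(u)}·k^α_u·x. Then P_{α,u,r}f = c_{α,u,r}·f, where c_{α,u,r} = ∫_{Q_r(u)} |k^α_u(z)|² dλ_α(z) satisfies (αr²/π)ⁿ e^{-nαr²/2} ≤ c_{α,u,r} ≤ 1. -/
open MeasureTheory ENNReal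
open scoped ComplexOrder

/-!
The density `|k^α_u|² dλ_α` is the Gaussian `(α/π)ⁿ e^{-α|w-u|²} dv(w)` centred at `u`, and
`Q_r(u)` is a product of squares centred at the coordinates of `u`, so Fubini factors
`c_{α,u,r} = ((α/π) G²)ⁿ` with `G = ∫_{-r/2}^{r/2} e^{-αt²} dt`. The full Gaussian integral gives
`G² ≤ π/α`, and the minimum of the integrand gives `G ≥ r e^{-αr²/4}`. The eigenvalue identity is
`conj(k^α_u) k^α_u = |k^α_u|²` on the cube.
-/

open Real Set Metric

section Gaussian

variable {α : ℝ}

lemma setIntegral_exp_neg_mul_sq_le (hα : 0 < α) (s : Set ℝ) :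
    ∫ t in s, exp (-α * t ^ 2) ≤ sqrt (π / α) :=
  integral_gaussian α ▸ setIntegral_le_integral (integrable_exp_neg_mul_sq hα)
    (.of_forall fun _ => (exp_pos _).le)

lemma mul_exp_le_setIntegral_closedBall_exp_neg_mul_sq (hα : 0 ≤ α) {r : ℝ} (hr : 0 ≤ r) :
    r * exp (-α * r ^ 2 / 4) ≤ ∫ t in closedBall 0 (r / 2), exp (-α * t ^ 2) := by
  have hbound : ∀ t ∈ closedBall (0 : ℝ) (r / 2), exp (-α * r ^ 2 / 4) ≤ exp (-α * t ^ 2) := by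
    intro t ht
    have : t ^ 2 ≤ (r / 2) ^ 2 := by
      rw [← sq_abs]
      exact pow_le_pow_left₀ (abs_nonneg t) (mem_closedBall_zero_iff.mp ht) 2
    gcongr exp ?_
    nlinarith
  have := setIntegral_ge_of_const_le_real (μ := volume) measurableSet_closedBall
    measure_closedBall_lt_top.ne hbound
    (ContinuousOn.integrableOn_compact (isCompact_closedBall 0 _) (by fun_prop))
  rwa [volume_real_closedBall (by linarith), mul_comm, show 2 * (r / 2) = r by ring] at this

end Gaussian

lemma setIntegral_closedBall_comp_sub {E : Type*} [NormedAddCommGroup E] [NormedSpace ℝ E]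
    (f : ℝ → E) (a ρ : ℝ) :
    ∫ x in closedBall a ρ, f (x - a) = ∫ t in closedBall 0 ρ, f t := by
  have hpre : (· - a) ⁻¹' closedBall 0 ρ = closedBall a ρ := by
    ext x
    simp [Real.dist_eq]
  rw [← hpre]
  exact (measurePreserving_sub_right volume a).setIntegral_preimage_emb
    (measurableEmbedding_subRight a) f _

lemma setIntegral_reProdIm_mul {𝕜 : Type*} [RCLike 𝕜] (f g : ℝ → 𝕜) (s t : Set ℝ) :
    ∫ z in s ×ℂ t, f z.re * g z.im = (∫ x in s, f x) * ∫ y in t, g y := by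
  rw [← setIntegral_prod_mul, ← Measure.volume_eq_prod]
  exact Complex.volume_preserving_equiv_real_prod.setIntegral_preimage_emb
    Complex.measurableEquivRealProd.measurableEmbedding (fun p => f p.1 * g p.2) (s ×ˢ t)

lemma setIntegral_square_exp_neg_mul_norm_sub_sq (α : ℝ) (c : ℂ) (ρ : ℝ) :
    ∫ z in closedBall c.re ρ ×ℂ closedBall c.im ρ, exp (-α * ‖z - c‖ ^ 2) =
      (∫ t in closedBall 0 ρ, exp (-α * t ^ 2)) ^ 2 := by
  have hsplit : ∀ z : ℂ, exp (-α * ‖z - c‖ ^ 2) =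
      exp (-α * (z.re - c.re) ^ 2) * exp (-α * (z.im - c.im) ^ 2) := by
    intro z
    rw [← exp_add, Complex.sq_norm, Complex.normSq_apply, Complex.sub_re, Complex.sub_im]
    ring_nf
  simp_rw [hsplit]
  rw [setIntegral_reProdIm_mul (fun x => exp (-α * (x - c.re) ^ 2))
    (fun y => exp (-α * (y - c.im) ^ 2)),
    setIntegral_closedBall_comp_sub (fun t => exp (-α * t ^ 2)),
    setIntegral_closedBall_comp_sub (fun t => exp (-α * t ^ 2)), sq]

section Cube

variable {n : ℕ}

lemma cube_eq_preimage_pi (u : Cspace n) (r : ℝ) :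
    cube u r = WithLp.ofLp ⁻¹'
      univ.pi (fun j => closedBall (u j).re (r / 2) ×ℂ closedBall (u j).im (r / 2)) := by
  ext w
  simp [cube, Complex.mem_reProdIm, Real.dist_eq]

lemma measurableSet_cube (u : Cspace n) (r : ℝ) : MeasurableSet (cube u r) := by
  rw [cube_eq_preimage_pi]
  exact WithLp.measurable_ofLp _ _ <| .univ_pi fun j =>
    (Complex.measurable_re measurableSet_closedBall).inter
      (Complex.measurable_im measurableSet_closedBall)

lemma setIntegral_cube_prod {𝕜 : Type*} [RCLike 𝕜] (u : Cspace n) (r : ℝ) (f : Fin n → ℂ → 𝕜) :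
    ∫ w in cube u r, ∏ j, f j (w j) =
      ∏ j, ∫ z in closedBall (u j).re (r / 2) ×ℂ closedBall (u j).im (r / 2), f j z := by
  have hvol : (volume : Measure (Cspace n)) =
      Measure.map (MeasurableEquiv.toLp 2 (Fin n → ℂ)) volume := rfl
  rw [cube_eq_preimage_pi, hvol,
    (MeasurableEquiv.toLp 2 (Fin n → ℂ)).measurableEmbedding.setIntegral_map, volume_pi]
  exact (congrArg (integral · _) (Measure.restrict_pi_pi _ _)).trans
    (integral_fintype_prod_eq_prod _)

lemma gaussDensity_mul_norm_fockKernel_sq (α : ℝ) (u w : Cspace n) :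
    gaussDensity α w * ‖fockKernel α u w‖ ^ 2 = (α / π) ^ n * exp (-α * ‖w - u‖ ^ 2) := by
  have hre : ((α : ℂ) * inner ℂ u w - ((α / 2 * ‖u‖ ^ 2 : ℝ) : ℂ)).re =
      α * (inner ℂ u w).re - α / 2 * ‖u‖ ^ 2 := by
    simp [-Complex.ofReal_pow]
  have hnorm : ‖w - u‖ ^ 2 = ‖w‖ ^ 2 - 2 * (inner ℂ u w).re + ‖u‖ ^ 2 := by
    rw [@norm_sub_sq ℂ, inner_re_symm]; rfl
  rw [gaussDensity, fockKernel, Complex.norm_exp, hre, mul_assoc, ← exp_nat_mul, ← exp_add,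
    hnorm]
  ring_nf

lemma exp_neg_mul_norm_sub_sq (α : ℝ) (u w : Cspace n) :
    exp (-α * ‖w - u‖ ^ 2) = ∏ j, exp (-α * ‖w j - u j‖ ^ 2) := by
  rw [← exp_sum, EuclideanSpace.norm_eq, sq_sqrt (by positivity), Finset.mul_sum]
  rfl

lemma setIntegral_cube_gaussDensity_mul_norm_fockKernel_sq (α : ℝ) (u : Cspace n) (r : ℝ) :
    ∫ w in cube u r, gaussDensity α w * ‖fockKernel α u w‖ ^ 2 =
      (α / π * (∫ t in closedBall 0 (r / 2), exp (-α * t ^ 2)) ^ 2) ^ n := by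
  simp_rw [gaussDensity_mul_norm_fockKernel_sq, exp_neg_mul_norm_sub_sq]
  rw [integral_const_mul, setIntegral_cube_prod u r (fun j z => exp (-α * ‖z - u j‖ ^ 2))]
  simp_rw [setIntegral_square_exp_neg_mul_norm_sub_sq]
  rw [Finset.prod_const, Finset.card_univ, Fintype.card_fin, mul_pow]

lemma cubeProj_indicator_fockKernel_smul {d : ℕ} (α : ℝ) (u : Cspace n) (r : ℝ)
    (x : EuclideanSpace ℂ (Fin d)) (z : Cspace n) :
    cubeProj α u r (fun w => (cube u r).indicator (fockKernel α u) w • x) z =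
      (∫ w in cube u r, gaussDensity α w * ‖fockKernel α u w‖ ^ 2) •
        ((cube u r).indicator (fockKernel α u) z • x) := by
  have hcoeff : ∫ ζ in cube u r, gaussDensity α ζ • (starRingEnd ℂ (fockKernel α u ζ) •
        ((cube u r).indicator (fockKernel α u) ζ • x)) =
      (∫ w in cube u r, gaussDensity α w * ‖fockKernel α u w‖ ^ 2) • x := by
    rw [← integral_smul_const]
    refine setIntegral_congr_fun (measurableSet_cube u r) fun ζ hζ => ?_
    rw [indicator_of_mem hζ, smul_smul, Complex.conj_mul', mul_smul, ← Complex.ofReal_pow,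
      Complex.coe_smul]
  by_cases hz : z ∈ cube u r
  · simp only [cubeProj, indicator_of_mem hz, hcoeff, smul_comm (fockKernel α u z)]
  · simp only [cubeProj, indicator_of_notMem hz, zero_smul, smul_zero]

end Cube

theorem stmt17_general {n d : ℕ} (α r : ℝ) (hα : 0 < α) (hr : 0 < r)
    (u : Cspace n) (x : EuclideanSpace ℂ (Fin d)) :
    (∀ z : Cspace n,
      cubeProj α u r (fun w => Set.indicator (cube u r) (fockKernel α u) w • x) z =
        (∫ w in cube u r, gaussDensity α w * ‖fockKernel α u w‖ ^ 2) •
          (Set.indicator (cube u r) (fockKernel α u) z • x)) ∧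
    (α * r ^ 2 / Real.pi) ^ n * Real.exp (-(n * α * r ^ 2) / 2) ≤
      (∫ w in cube u r, gaussDensity α w * ‖fockKernel α u w‖ ^ 2) ∧
    (∫ w in cube u r, gaussDensity α w * ‖fockKernel α u w‖ ^ 2) ≤ 1 := by
  set G := ∫ t in closedBall 0 (r / 2), exp (-α * t ^ 2)
  refine ⟨cubeProj_indicator_fockKernel_smul α u r x, ?_, ?_⟩ <;>
    rw [setIntegral_cube_gaussDensity_mul_norm_fockKernel_sq]
  · calc (α * r ^ 2 / π) ^ n * exp (-(n * α * r ^ 2) / 2)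
        = (α / π * (r * exp (-α * r ^ 2 / 4)) ^ 2) ^ n := by
          rw [mul_pow r, ← exp_nat_mul, ← mul_assoc, mul_pow _ (exp _), ← exp_nat_mul]
          congr 2 <;> push_cast <;> ring
      _ ≤ (α / π * G ^ 2) ^ n := by
          gcongr
          exact mul_exp_le_setIntegral_closedBall_exp_neg_mul_sq hα.le hr.le
  · refine pow_le_one₀ (by positivity) ?_
    calc α / π * G ^ 2 ≤ α / π * sqrt (π / α) ^ 2 := by
          gcongr
          exact setIntegral_exp_neg_mul_sq_le hα _
      _ = 1 := by
          rw [sq_sqrt (by positivity)]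
          field_simp

/-- for `f = χ_{Q_r(u)} k^α_u x` one has `P_{α,u,r} f = c_{α,u,r} f`,
where `c_{α,u,r} = ∫_{Q_r(u)} |k^α_u|² dλ_α` satisfies
`(αr²/π)ⁿ e^{-nαr²/2} ≤ c_{α,u,r} ≤ 1`. -/
theorem stmt17 {n d : ℕ} (hn : 0 < n) (hd : 0 < d) (α r : ℝ) (hα : 0 < α) (hr : 0 < r)
    (u : Cspace n) (x : EuclideanSpace ℂ (Fin d)) :
    (∀ z : Cspace n,
      cubeProj α u r (fun w => Set.indicator (cube u r) (fockKernel α u) w • x) z =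
        (∫ w in cube u r, gaussDensity α w * ‖fockKernel α u w‖ ^ 2) •
          (Set.indicator (cube u r) (fockKernel α u) z • x)) ∧
    (α * r ^ 2 / Real.pi) ^ n * Real.exp (-(n * α * r ^ 2) / 2) ≤
      (∫ w in cube u r, gaussDensity α w * ‖fockKernel α u w‖ ^ 2) ∧
    (∫ w in cube u r, gaussDensity α w * ‖fockKernel α u w‖ ^ 2) ≤ 1 :=
  stmt17_general α r hα hr u x
end
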